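/- Let n = 2m and let f be the rotation symmetric Boolean function with short algebraic normal form x₀x_k (1 ≤ k ≤ n-1), i.e., f is the sum of all distinct cyclic shifts of x₀x_k. Then f is bent if and only if k = m. -/

import Mathlib

/-!
If `k ≠ m` then `k + k ≠ 0` in `ℤ/2m`, the orbits `{j, j + k}` are pairwise distinct, and
`f x = ∑ⱼ xⱼ x_{j+k}`. Complementing all variables then leaves `f` unchanged (the linear terms
cancel in pairs by the shift `j ↦ j + k`, and there are an even number of constant terms), so the
Walsh coefficient at any odd-weight `w` vanishes. If `k = m` there are only `m` orbits
`{j, j + m}`, and `f x = ∑_{j<m} xⱼ x_{j+m}` is the inner product bent function, whose Walsh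
coefficients are `±2^m` because the character sum factors into `m` sums over `𝔽₂²`.
-/

open Finset

section Walsh

lemma neg_one_pow_val_add (a b : ZMod 2) :
    (-1 : ℤ) ^ (a + b).val = (-1) ^ a.val * (-1) ^ b.val := by
  revert a b; decide

lemma neg_one_pow_val_sum {ι : Type*} (s : Finset ι) (g : ι → ZMod 2) :
    (-1 : ℤ) ^ (∑ i ∈ s, g i).val = ∏ i ∈ s, (-1 : ℤ) ^ (g i).val := by
  induction s using Finset.cons_induction with
  | empty => simp
  | cons a s ha ih => rw [sum_cons, prod_cons, neg_one_pow_val_add, ih]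

lemma sum_neg_one_pow_val_mul_add (u v : ZMod 2) :
    ∑ p : ZMod 2 × ZMod 2, (-1 : ℤ) ^ (p.1 * p.2 + u * p.1 + v * p.2).val
      = 2 * (-1) ^ (u * v).val := by
  revert u v; decide

variable {ι : Type*} [Fintype ι] [DecidableEq ι]

def walsh (f : (ι → ZMod 2) → ZMod 2) (w : ι → ZMod 2) : ℤ :=
  ∑ x, (-1 : ℤ) ^ (f x + ∑ i, w i * x i).val

theorem walsh_eq_zero_of_periodic {f : (ι → ZMod 2) → ZMod 2} {w c : ι → ZMod 2}
    (hf : ∀ x, f (x + c) = f x) (hw : ∑ i, w i * c i = 1) : walsh f w = 0 := by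
  have hflip : ∀ x, (-1 : ℤ) ^ (f (x + c) + ∑ i, w i * (x + c) i).val
      = -(-1) ^ (f x + ∑ i, w i * x i).val := by
    intro x
    have hphase : f (x + c) + ∑ i, w i * (x + c) i = (f x + ∑ i, w i * x i) + 1 := by
      simp only [hf, Pi.add_apply, mul_add, sum_add_distrib, hw, add_assoc]
    rw [hphase, neg_one_pow_val_add, show (-1 : ℤ) ^ (1 : ZMod 2).val = -1 from rfl,
      mul_neg_one]
  have hshift :=
    Equiv.sum_comp (Equiv.addRight c) fun x => (-1 : ℤ) ^ (f x + ∑ i, w i * x i).val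
  simp only [Equiv.coe_addRight, hflip, sum_neg_distrib] at hshift
  rw [walsh]
  linarith

theorem walsh_sum_mul {κ : Type*} [Fintype κ] [DecidableEq κ] (e : κ ⊕ κ ≃ ι)
    (w : ι → ZMod 2) :
    walsh (fun x => ∑ j, x (e (.inl j)) * x (e (.inr j))) w
      = 2 ^ Fintype.card κ * (-1) ^ (∑ j, w (e (.inl j)) * w (e (.inr j))).val := by
  let pairs : (κ → ZMod 2 × ZMod 2) ≃ (ι → ZMod 2) :=
    ((Equiv.arrowProdEquivProdArrow _ _ _).trans (Equiv.sumArrowEquivProdArrow _ _ _).symm).trans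
      (e.arrowCongr (Equiv.refl _))
  have hinl : ∀ y j, pairs y (e (.inl j)) = (y j).1 := by simp [pairs]
  have hinr : ∀ y j, pairs y (e (.inr j)) = (y j).2 := by simp [pairs]
  calc walsh (fun x => ∑ j, x (e (.inl j)) * x (e (.inr j))) w
      = ∑ y : κ → ZMod 2 × ZMod 2, ∏ j, (-1 : ℤ) ^
          ((y j).1 * (y j).2 + w (e (.inl j)) * (y j).1 + w (e (.inr j)) * (y j).2).val := by
        rw [walsh, ← pairs.sum_comp]
        refine sum_congr rfl fun y _ => ?_
        rw [← neg_one_pow_val_sum, ← e.sum_comp]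
        simp only [Fintype.sum_sum_type, hinl, hinr, ← sum_add_distrib, add_assoc]
    _ = ∏ j, ∑ p : ZMod 2 × ZMod 2,
          (-1 : ℤ) ^ (p.1 * p.2 + w (e (.inl j)) * p.1 + w (e (.inr j)) * p.2).val := by
        rw [Fintype.prod_sum]
    _ = _ := by
        simp only [sum_neg_one_pow_val_mul_add, prod_mul_distrib, prod_const, card_univ,
          ← neg_one_pow_val_sum]

end Walsh

section RotationSymmetric

variable {G : Type*} [AddGroup G]

lemma sum_mul_shift_add_one [Fintype G] (hG : (Fintype.card G : ZMod 2) = 0) (k : G)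
    (x : G → ZMod 2) : ∑ j, (x + 1) j * (x + 1) (k + j) = ∑ j, x j * x (k + j) := by
  have hshift : ∑ j, x (k + j) = ∑ j, x j := Equiv.sum_comp (Equiv.addLeft k) x
  have hexpand : ∀ j, (x + 1) j * (x + 1) (k + j) = x j * x (k + j) + (x j + x (k + j)) + 1 :=
    fun j => by simp only [Pi.add_apply, Pi.one_apply]; ring
  simp only [hexpand, sum_add_distrib, hshift, CharTwo.add_self_eq_zero, sum_const, card_univ,
    nsmul_one, hG, add_zero]

variable [DecidableEq G]

lemma image_pair_add_right (k j : G) : ({0, k} : Finset G).image (· + j) = {j, k + j} := by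
  simp [image_insert]

variable [Fintype G]

/-- For `G = ℤ/n` this is the rotation symmetric function with short ANF `x₀ x_k`. -/
def rotSymPair (k : G) (x : G → ZMod 2) : ZMod 2 :=
  ∑ T ∈ univ.image (fun j => ({0, k} : Finset G).image (· + j)), ∏ t ∈ T, x t

lemma rotSymPair_of_add_self_ne_zero {k : G} (hk : k + k ≠ 0) (x : G → ZMod 2) :
    rotSymPair k x = ∑ j, x j * x (k + j) := by
  have hinj : Function.Injective fun j => ({0, k} : Finset G).image (· + j) := by
    intro j j' h
    simp only [image_pair_add_right] at h
    have hj : j ∈ ({j', k + j'} : Finset G) := h ▸ mem_insert_self j _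
    have hkj : k + j ∈ ({j', k + j'} : Finset G) := h ▸ mem_insert_of_mem (mem_singleton_self _)
    simp only [mem_insert, mem_singleton] at hj hkj
    rcases hj with rfl | rfl
    · rfl
    · rcases hkj with h' | h'
      · exact absurd (by simpa [← add_assoc] using h') hk
      · exact add_left_cancel h'
  rw [rotSymPair, sum_image hinj.injOn]
  refine sum_congr rfl fun j _ => ?_
  have hj : j ≠ k + j := fun h => hk (by rw [right_eq_add.mp h, add_zero])
  rw [image_pair_add_right, prod_pair hj]

lemma rotSymPair_of_add_self_eq_zero {κ : Type*} [Fintype κ] {k : G} (hk : k + k = 0)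
    (e : κ ⊕ κ ≃ G) (he : ∀ j, e (.inr j) = k + e (.inl j)) (x : G → ZMod 2) :
    rotSymPair k x = ∑ j, x (e (.inl j)) * x (e (.inr j)) := by
  have horbits : univ.image (fun j => ({0, k} : Finset G).image (· + j))
      = univ.image (fun j => ({e (.inl j), e (.inr j)} : Finset G)) := by
    ext T
    simp only [mem_image, mem_univ, true_and, image_pair_add_right]
    constructor
    · rintro ⟨g, rfl⟩
      obtain ⟨j | j, rfl⟩ := e.surjective g
      · exact ⟨j, by rw [he]⟩
      · exact ⟨j, by rw [he, ← add_assoc, hk, zero_add, pair_comm]⟩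
    · rintro ⟨j, rfl⟩
      exact ⟨e (.inl j), by rw [he]⟩
  have hinj : Function.Injective fun j => ({e (.inl j), e (.inr j)} : Finset G) := by
    intro j j' h
    dsimp only at h
    have hj : e (.inl j) ∈ ({e (.inl j'), e (.inr j')} : Finset G) := h ▸ mem_insert_self _ _
    simpa using hj
  rw [rotSymPair, horbits, sum_image hinj.injOn]
  exact sum_congr rfl fun j _ => prod_pair (by simp)

end RotationSymmetric

lemma fin_two_mul_add_self_eq_zero_iff {m : ℕ} [NeZero (2 * m)] (k : Fin (2 * m)) :
    k + k = 0 ↔ k.val = 0 ∨ k.val = m := by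
  rw [Fin.ext_iff, Fin.val_add_eq_ite, Fin.val_zero]
  split_ifs <;> omega

theorem stmt10 (m : ℕ) (k : Fin (2*m)) (hk1 : 1 ≤ k.val) :
    (∀ w : Fin (2*m) → ZMod 2,
      (∑ x : Fin (2*m) → ZMod 2,
        (-1 : ℤ) ^ (((∑ T ∈ Finset.univ.image (fun j : Fin (2*m) =>
            ({⟨0, by omega⟩, k} : Finset (Fin (2*m))).image (· + j)), ∏ t ∈ T, x t)
          + ∑ i, w i * x i).val)) = 2 ^ m ∨
      (∑ x : Fin (2*m) → ZMod 2,
        (-1 : ℤ) ^ (((∑ T ∈ Finset.univ.image (fun j : Fin (2*m) =>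
            ({⟨0, by omega⟩, k} : Finset (Fin (2*m))).image (· + j)), ∏ t ∈ T, x t)
          + ∑ i, w i * x i).val)) = -(2 ^ m))
    ↔ k.val = m := by
  have : NeZero (2 * m) := ⟨by omega⟩
  -- `⟨0, _⟩` is definitionally `(0 : Fin (2 * m))`
  change (∀ w, walsh (rotSymPair k) w = 2 ^ m ∨ walsh (rotSymPair k) w = -(2 ^ m)) ↔ k.val = m
  constructor
  · intro hbent
    by_contra hkm
    have hkk : k + k ≠ 0 := fun h =>
      ((fin_two_mul_add_self_eq_zero_iff k).mp h).elim (by omega) hkm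
    have hzero : walsh (rotSymPair k) (Pi.single 0 1) = 0 := by
      rw [show rotSymPair k = _ from funext (rotSymPair_of_add_self_ne_zero hkk)]
      exact walsh_eq_zero_of_periodic (sum_mul_shift_add_one
        (by rw [Fintype.card_fin, Nat.cast_mul, ZMod.natCast_self, zero_mul]) k) (by simp)
    have hpow : (0 : ℤ) < 2 ^ m := by positivity
    rcases hbent (Pi.single 0 1) with h | h <;> rw [hzero] at h <;> linarith
  · intro hk w
    let e : Fin m ⊕ Fin m ≃ Fin (2 * m) := finSumFinEquiv.trans (finCongr (two_mul m).symm)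
    have hkk : k + k = 0 := (fin_two_mul_add_self_eq_zero_iff k).mpr (.inr hk)
    have he : ∀ j, e (.inr j) = k + e (.inl j) := by
      intro j
      ext
      simp [e, Fin.val_add, hk, Nat.mod_eq_of_lt (by omega : m + j < 2 * m), add_comm]
    rw [show rotSymPair k = _ from funext (rotSymPair_of_add_self_eq_zero hkk e he),
      walsh_sum_mul, Fintype.card_fin]
    rcases neg_one_pow_eq_or ℤ (∑ j, w (e (.inl j)) * w (e (.inr j))).val with h | h <;>
      simp [h]
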